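/- Let C be a small category equipped with a Grothendieck topology J, let ι be a small type, let (Uᵢ)_{i : ι} be objects of C, let X be an object of C, and let fᵢ : Uᵢ ⟶ X be a family of morphisms. Then the sieve generated by the presieve of the fᵢ is a J-covering sieve on X if and only if the induced morphism ∐ᵢ a(y(Uᵢ)) ⟶ a(y(X)) in Sheaf J (Type u) is an epimorphism, where y is the Yoneda embedding and a = presheafToSheaf J (Type u) is sheafification. -/

import Mathlib

/-!
Sheafification is a left adjoint, so it carries `∐ᵢ y(Uᵢ) ⟶ y(X)` to the map in question, up to
the coproduct comparison isomorphism. A morphism of sheaves of types is an epimorphism iff it is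
locally surjective, and sheafifying neither creates nor destroys local surjectivity. Finally, the
image sieve of a section `s : V ⟶ X` under `∐ᵢ y(Uᵢ) ⟶ y(X)` is the pullback along `s` of the sieve
generated by the `fᵢ`, so local surjectivity of this presheaf map says exactly that this sieve
covers.
-/

open CategoryTheory Limits

universe u

instance statement6_hasCoproduct {C : Type u} [SmallCategory C] (J : GrothendieckTopology C)
    {ι : Type u} (F : ι → Sheaf J (Type u)) : HasCoproduct F :=
  @HasColimitsOfShape.has_colimit _ _ _ _ Sheaf.instHasColimitsOfShape _

lemma epi_sigmaDesc_map_iff {C D : Type*} [Category C] [Category D] (F : C ⥤ D) {ι : Type*}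
    {Y : ι → C} {X : C} (g : ∀ i, Y i ⟶ X) [HasCoproduct Y] [HasCoproduct fun i => F.obj (Y i)]
    [PreservesColimit (Discrete.functor Y) F] :
    Epi (Limits.Sigma.desc fun i => F.map (g i)) ↔ Epi (F.map (Limits.Sigma.desc g)) := by
  rw [← sigmaComparison_map_desc, epi_comp_iff_of_epi]

section

universe v w

variable {C : Type w} [Category.{v} C]

lemma sigmaDesc_shrinkYoneda_map_comp_shrinkYonedaIsoYoneda {ι : Type v} {U : ι → C} {X : C}
    (f : ∀ i, U i ⟶ X) :
    Limits.Sigma.desc (fun i => shrinkYoneda.{v}.map (f i)) ≫ shrinkYonedaIsoYoneda.hom.app X =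
      Limits.Sigma.map (fun i => shrinkYonedaIsoYoneda.hom.app (U i)) ≫
        Limits.Sigma.desc (fun i => yoneda.map (f i)) := by
  ext1 i
  simp only [Sigma.ι_desc_assoc, Sigma.ι_map_assoc, Sigma.ι_desc]
  exact shrinkYonedaIsoYoneda.hom.naturality (f i)

lemma ofArrows_mem_iff_isLocallySurjective_sigmaDesc_yoneda_map (J : GrothendieckTopology C)
    {ι : Type v} {U : ι → C} {X : C} (f : ∀ i, U i ⟶ X) :
    Sieve.ofArrows U f ∈ J X ↔
      Presheaf.IsLocallySurjective J (Limits.Sigma.desc fun i => yoneda.map (f i)) := by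
  rw [J.ofArrows_mem_iff_isLocallySurjective_sigmaDesc_shrinkYoneda_map.{v},
    ← Presheaf.isLocallySurjective_comp_iff J _ (shrinkYonedaIsoYoneda.hom.app X),
    sigmaDesc_shrinkYoneda_map_comp_shrinkYonedaIsoYoneda, Presheaf.comp_isLocallySurjective_iff]

end

theorem statement6 {C : Type u} [SmallCategory C] (J : GrothendieckTopology C)
    {ι : Type u} (U : ι → C) (X : C) (f : ∀ i, U i ⟶ X) :
    Sieve.generate (Presieve.ofArrows U f) ∈ J X ↔
      Epi (Limits.Sigma.desc fun i => (presheafToSheaf J (Type u)).map (yoneda.map (f i))) := by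
  rw [epi_sigmaDesc_map_iff, ← Sheaf.isLocallySurjective_iff_epi,
    Presheaf.isLocallySurjective_presheafToSheaf_map_iff]
  exact ofArrows_mem_iff_isLocallySurjective_sigmaDesc_yoneda_map J f
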